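/- Let S¹ = ℝ/ℤ act continuously on a compact metric space N and let Δ ⊆ N be a closed set such that for every y ∈ N the set {α ∈ S¹ : α·y ∈ Δ} is finite. Then for every ε > 0 there is an open neighborhood W of Δ such that λ({α ∈ S¹ : α·y ∈ W}) < ε for all y ∈ N, where λ is normalized Haar measure on S¹. -/

import Mathlib

/-!
For a closed set `C`, the measure of the visit times `y ↦ λ{α | α +ᵥ y ∈ C}` is upper
semicontinuous in `y` (outer regularity of `λ` plus the tube lemma). For the closed thickenings
`C = cthickening δ Δ` these functions decrease, as `δ ↓ 0`, to the measure of a finite set, which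
is `0`. Hence the open sets `{y | λ{α | α +ᵥ y ∈ cthickening δ Δ} < ε}` increase as `δ ↓ 0` and
cover the compact space `N`, so one of them is all of `N`, and the open `δ`-thickening of `Δ`
is the required `W`.
-/

open MeasureTheory Filter Topology Set Metric

instance AddCircle.nullSingletonClass_volume (T : ℝ) [Fact (0 < T)] :
    NullSingletonClass (volume : Measure (AddCircle T)) where
  measure_singleton x := by
    simpa [closedBall_zero, (Fact.out : 0 < T).le] using
      AddCircle.volume_closedBall T (x := x) 0

theorem IsClosed.upperSemicontinuous_measure_slice {G N : Type*} [TopologicalSpace G]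
    [CompactSpace G] [MeasurableSpace G] (μ : Measure G) [μ.OuterRegular] [TopologicalSpace N]
    {C : Set (G × N)} (hC : IsClosed C) : UpperSemicontinuous fun y => μ {α | (α, y) ∈ C} := by
  intro y₀ c hc
  obtain ⟨U, hsub, hUo, hUc⟩ := Set.exists_isOpen_lt_of_lt _ c hc
  obtain ⟨u, V, -, hVo, hUu, hyV, huV⟩ := generalized_tube_lemma hUo.isClosed_compl.isCompact
    isCompact_singleton hC.isOpen_compl (t := {y₀}) <| by
      rintro ⟨α, y⟩ ⟨hαU, rfl : y = y₀⟩ hαC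
      exact hαU (hsub hαC)
  filter_upwards [hVo.mem_nhds (hyV rfl)] with y hy
  refine (measure_mono fun α hα => ?_).trans_lt hUc
  by_contra hαU
  exact huV (mk_mem_prod (hUu hαU) hy) hα

theorem Continuous.tendsto_measure_preimage_cthickening {G M : Type*} [TopologicalSpace G]
    [MeasurableSpace G] [OpensMeasurableSpace G] [PseudoMetricSpace M] (μ : Measure G)
    [IsFiniteMeasure μ] {f : G → M} (hf : Continuous f) {Δ : Set M} (hΔ : IsClosed Δ) :
    Tendsto (fun δ => μ (f ⁻¹' cthickening δ Δ)) (𝓝[>] 0) (𝓝 (μ (f ⁻¹' Δ))) := by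
  have h := tendsto_measure_biInter_gt (μ := μ) (s := fun δ => f ⁻¹' cthickening δ Δ) (a := 0)
    (fun δ _ => (isClosed_cthickening.preimage hf).measurableSet.nullMeasurableSet)
    (fun _ _ _ hδ => preimage_mono (cthickening_mono hδ Δ)) ⟨1, one_pos, measure_ne_top _ _⟩
  rwa [← preimage_iInter₂, ← closure_eq_iInter_cthickening, hΔ.closure_eq] at h

theorem CompactSpace.exists_pos_forall_lt_of_upperSemicontinuous {X β : Type*}
    [TopologicalSpace X] [CompactSpace X] [Preorder β] {f : ℝ → X → β} {c : β}
    (husc : ∀ δ, UpperSemicontinuous (f δ)) (hmono : ∀ x, Monotone (f · x))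
    (h : ∀ x, ∃ δ > 0, f δ x < c) : ∃ δ > 0, ∀ x, f δ x < c := by
  obtain ⟨⟨δ, hδ⟩, hcover⟩ := isCompact_univ.elim_directed_cover
    (fun δ : Ioi (0 : ℝ) => f δ ⁻¹' Iio c) (fun δ => (husc δ).isOpen_preimage c)
    (fun x _ => by obtain ⟨δ, hδ, hx⟩ := h x; exact mem_iUnion.2 ⟨⟨δ, hδ⟩, hx⟩)
    fun δ ε => ⟨⟨min δ ε, (lt_min δ.2 ε.2 : (0 : ℝ) < _)⟩,
      fun x hx => (hmono x (min_le_left _ _)).trans_lt hx,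
      fun x hx => (hmono x (min_le_right _ _)).trans_lt hx⟩
  exact ⟨δ, hδ, fun x => hcover (mem_univ x)⟩

/-- For a continuous `S¹`-action on a compact metric space and a closed set `Δ` met by every
orbit at finitely many times, every `ε > 0` admits an open neighborhood `W` of `Δ` whose
visit-time sets have Haar measure less than `ε`. -/
theorem small_neighborhood_of_finite_visits {N : Type*}
    [MetricSpace N] [CompactSpace N] [AddAction (AddCircle (1 : ℝ)) N]
    (hcont : Continuous fun p : AddCircle (1 : ℝ) × N => p.1 +ᵥ p.2)
    (Δ : Set N) (hΔ : IsClosed Δ)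
    (hfin : ∀ y : N, {α : AddCircle (1 : ℝ) | α +ᵥ y ∈ Δ}.Finite) :
    ∀ ε : ℝ, 0 < ε → ∃ W : Set N, IsOpen W ∧ Δ ⊆ W ∧
      ∀ y : N, (volume : Measure (AddCircle (1 : ℝ))) {α : AddCircle (1 : ℝ) | α +ᵥ y ∈ W}
        < ENNReal.ofReal ε := by
  intro ε hε
  have hvisits_small (y : N) : ∃ δ > 0, (volume : Measure (AddCircle (1 : ℝ)))
      {α | α +ᵥ y ∈ cthickening δ Δ} < ENNReal.ofReal ε := by
    have hlim := Continuous.tendsto_measure_preimage_cthickening (f := (· +ᵥ y)) volume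
      (hcont.comp (Continuous.prodMk_left y)) hΔ
    have hnull : volume ((· +ᵥ y) ⁻¹' Δ : Set (AddCircle (1 : ℝ))) = 0 := (hfin y).measure_zero _
    rw [hnull] at hlim
    exact ((hlim.eventually_lt_const (ENNReal.ofReal_pos.2 hε)).and
      self_mem_nhdsWithin).exists.imp fun δ h => ⟨h.2, h.1⟩
  obtain ⟨δ, hδ, hsmall⟩ := CompactSpace.exists_pos_forall_lt_of_upperSemicontinuous
    (fun δ => (isClosed_cthickening.preimage hcont).upperSemicontinuous_measure_slice volume)
    (fun y _ _ h => measure_mono fun _ hα => cthickening_mono h Δ hα) hvisits_small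
  exact ⟨thickening δ Δ, isOpen_thickening, self_subset_thickening hδ Δ, fun y =>
    lt_of_le_of_lt (measure_mono fun _ hα => thickening_subset_cthickening δ Δ hα) (hsmall y)⟩
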